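/- Let p be a prime, q a prime power coprime to p such that the class of q is a primitive element of F_p, and let R = F_q[Y]/(Y^p − 1). Let C ⊆ R^ℓ (ℓ ≥ 1) be a Hermitian self-dual linear code over R. Then there exists a codeword of C whose first coordinate is a unit of R. -/

import Mathlib

/-!
The first coordinates of the codewords of `C` form an ideal `I` of `R`. Since `p ≠ 0` in `F_q`,
`Y^p − 1` is separable, so the finite ring `R` is reduced and hence semisimple; if `I` were proper
it would therefore have a nonzero annihilator `e`. The vector `(conj e, 0, …, 0)` is then
orthogonal to `C`, so it lies in `C` by self-duality, and `e · conj e = 0`. As `q` generates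
`F_p^×`, some `q^k ≡ −1 (mod p)`, so conjugation is the Frobenius power `a ↦ a^(q^k)` and
`e^(q^k + 1) = 0`, contradicting reducedness.
-/

open Polynomial

noncomputable section

/-- The ring `R = F_q[Y]/(Y^m − 1)`. -/
abbrev Rq (F : Type) [Field F] (m : ℕ) := AdjoinRoot ((X : F[X]) ^ m - 1)

lemma root_pow_eq_one (F : Type) [Field F] (m : ℕ) :
    (AdjoinRoot.root ((X : F[X]) ^ m - 1)) ^ m = 1 := by
  have h : (aeval (AdjoinRoot.root ((X : F[X]) ^ m - 1)) ((X : F[X]) ^ m - 1)) = 0 := by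
    rw [AdjoinRoot.aeval_eq, AdjoinRoot.mk_self]
  simp only [map_sub, map_pow, aeval_X, map_one, sub_eq_zero] at h
  exact h

/-- Conjugation on `R`: the `F`-algebra map determined by `Y ↦ Y^{m−1} (= Y⁻¹)`. -/
noncomputable def conjR (F : Type) [Field F] (m : ℕ) : Rq F m →ₐ[F] Rq F m :=
  AdjoinRoot.liftAlgHom _ (Algebra.ofId F _) ((AdjoinRoot.root ((X : F[X]) ^ m - 1)) ^ (m - 1)) (by
    change aeval _ _ = 0
    simp only [map_sub, map_pow, aeval_X, map_one, sub_eq_zero, ← pow_mul]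
    rw [mul_comm, pow_mul, root_pow_eq_one, one_pow])

/-- The Hermitian inner product `⟨x,y⟩ = Σ_j x_j ⬝ conj(y_j)` on `R^n`. -/
def herm (F : Type) [Field F] (m : ℕ) {n : ℕ} (x y : Fin n → Rq F m) : Rq F m :=
  ∑ j, x j * conjR F m (y j)

/-- A linear code `C ⊆ R^n` is Hermitian self-dual if `C = C^⊥`, i.e. membership in `C`
coincides with orthogonality to all of `C`. -/
def IsHermSelfDual (F : Type) [Field F] (m : ℕ) {n : ℕ}
    (C : Submodule (Rq F m) (Fin n → Rq F m)) : Prop :=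
  ∀ y, y ∈ C ↔ ∀ x ∈ C, herm F m x y = 0

lemma natCast_ne_zero_of_coprime_card (F : Type*) [Field F] [Fintype F] {n : ℕ}
    (h : n.Coprime (Fintype.card F)) : (n : F) ≠ 0 := fun hn ↦
  CharP.ringChar_ne_one (Nat.eq_one_of_dvd_coprimes h (ringChar.dvd hn)
    (ringChar.dvd (FiniteField.cast_card_eq_zero F)))

lemma ZMod.exists_natCast_pow_eq_neg_one {n q : ℕ} [NeZero n] (hq : q.Coprime n)
    (h : -1 ∈ Subgroup.zpowers (ZMod.unitOfCoprime q hq)) :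
    ∃ k : ℕ, ((q ^ k : ℕ) : ZMod n) = -1 := by
  obtain ⟨k, hk⟩ := mem_powers_iff_mem_zpowers.2 h
  exact ⟨k, by simpa using congrArg Units.val hk⟩

lemma Ideal.exists_ne_zero_mul_eq_zero_of_ne_top {R : Type*} [CommRing R] [IsSemisimpleRing R]
    {I : Ideal R} (hI : I ≠ ⊤) : ∃ e ≠ 0, ∀ x ∈ I, e * x = 0 := by
  obtain ⟨J, hIJ⟩ := exists_isCompl I
  obtain ⟨e, heJ, he⟩ := (Submodule.ne_bot_iff J).1 fun hJ ↦ hI (by simpa [hJ] using hIJ.sup_eq_top)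
  refine ⟨e, he, fun x hx ↦ ?_⟩
  have : e * x ∈ I ⊓ J := ⟨I.mul_mem_left e hx, J.mul_mem_right x heJ⟩
  simpa [hIJ.inf_eq_bot] using this

theorem exists_mem_isUnit_apply_of_selfDual {R : Type*} [CommRing R] [IsSemisimpleRing R]
    {σ : R →+* R} (hσσ : ∀ a, σ (σ a) = a) (hσ : ∀ a, a * σ a = 0 → a = 0)
    {ι : Type*} [Fintype ι] [DecidableEq ι] {C : Submodule R (ι → R)}
    (hC : ∀ y, y ∈ C ↔ ∀ x ∈ C, ∑ j, x j * σ (y j) = 0) (i : ι) :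
    ∃ v ∈ C, IsUnit (v i) := by
  by_contra! h
  obtain ⟨e, he, hann⟩ := Ideal.exists_ne_zero_mul_eq_zero_of_ne_top (I := C.map (.proj i))
    fun htop ↦ by
      obtain ⟨v, hv, hvi⟩ : (1 : R) ∈ C.map (LinearMap.proj i) := htop ▸ Submodule.mem_top
      exact h v hv ((show v i = 1 from hvi) ▸ isUnit_one)
  have hann' : ∀ x ∈ C, e * x i = 0 := fun x hx ↦ hann _ ⟨x, hx, rfl⟩
  have hw : Pi.single i (σ e) ∈ C := (hC _).2 fun x hx ↦ by
    rw [Finset.sum_eq_single i (fun j _ hj ↦ by simp [hj]) (by simp), Pi.single_eq_same, hσσ,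
      mul_comm, hann' x hx]
  exact he (hσ e (by simpa using hann' _ hw))

section AdjoinRootXPowSubOne

variable (F : Type) [Field F] {m : ℕ}

lemma conjR_root :
    conjR F m (AdjoinRoot.root ((X : F[X]) ^ m - 1))
      = AdjoinRoot.root ((X : F[X]) ^ m - 1) ^ (m - 1) :=
  AdjoinRoot.liftAlgHom_root ..

lemma root_pow_eq_root_pow_of_modEq {a b : ℕ} (h : a ≡ b [MOD m]) :
    AdjoinRoot.root ((X : F[X]) ^ m - 1) ^ a = AdjoinRoot.root ((X : F[X]) ^ m - 1) ^ b :=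
  pow_eq_pow_of_modEq h (root_pow_eq_one F m)

lemma conjR_conjR [NeZero m] (a : Rq F m) : conjR F m (conjR F m a) = a := by
  have hsq : (m - 1) * (m - 1) ≡ 1 [MOD m] := by
    rw [← ZMod.natCast_eq_natCast_iff]
    push_cast [Nat.cast_sub NeZero.one_le, ZMod.natCast_self]
    ring
  have h : (conjR F m).comp (conjR F m) = AlgHom.id F (Rq F m) := by
    apply AdjoinRoot.algHom_ext
    rw [AlgHom.comp_apply, conjR_root, map_pow, conjR_root, ← pow_mul, AlgHom.id_apply,
      root_pow_eq_root_pow_of_modEq F hsq, pow_one]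
  exact AlgHom.congr_fun h a

lemma conjR_eq_frobenius_pow [Fintype F] [NeZero m] {k : ℕ}
    (hk : ((Fintype.card F ^ k : ℕ) : ZMod m) = -1) (a : Rq F m) :
    conjR F m a = a ^ Fintype.card F ^ k := by
  have hmod : Fintype.card F ^ k ≡ m - 1 [MOD m] := by
    rw [← ZMod.natCast_eq_natCast_iff, hk, Nat.cast_sub NeZero.one_le, ZMod.natCast_self]
    ring
  have h : conjR F m = FiniteField.frobeniusAlgHom F (Rq F m) ^ k := by
    apply AdjoinRoot.algHom_ext
    rw [conjR_root, AlgHom.coe_pow, FiniteField.coe_frobeniusAlgHom, pow_iterate,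
      root_pow_eq_root_pow_of_modEq F hmod.symm]
  rw [h, AlgHom.coe_pow, FiniteField.coe_frobeniusAlgHom, pow_iterate]

variable [NeZero (m : F)]

lemma isReduced_Rq : IsReduced (Rq F m) := by
  refine ⟨fun a ⟨n, hn⟩ ↦ ?_⟩
  obtain ⟨b, rfl⟩ := AdjoinRoot.mk_surjective a
  rw [← map_pow, AdjoinRoot.mk_eq_zero] at hn
  rw [AdjoinRoot.mk_eq_zero]
  exact (X_pow_sub_one_separable_iff.2 (NeZero.ne _)).squarefree.isRadical n b hn

lemma isSemisimpleRing_Rq : IsSemisimpleRing (Rq F m) := by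
  have hmonic := monic_X_pow_sub_C (1 : F) (NeZero.of_neZero_natCast F (n := m)).out
  rw [map_one] at hmonic
  have := hmonic.finite_adjoinRoot
  have := isReduced_Rq F (m := m)
  have := IsArtinianRing.of_finite F (Rq F m)
  exact IsArtinianRing.isSemisimpleRing_of_isReduced _

lemma eq_zero_of_mul_conjR_self_eq_zero [Fintype F] {k : ℕ}
    (hk : ((Fintype.card F ^ k : ℕ) : ZMod m) = -1) {a : Rq F m} (h : a * conjR F m a = 0) :
    a = 0 := by
  have := isReduced_Rq F (m := m)
  have : NeZero m := .of_neZero_natCast F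
  rw [conjR_eq_frobenius_pow F hk, ← pow_succ'] at h
  exact IsNilpotent.eq_zero ⟨_, h⟩

end AdjoinRootXPowSubOne

theorem statement8_general (F : Type) [Field F] [Fintype F]
    (p : ℕ) (hcop : Nat.Coprime p (Fintype.card F))
    (hprim : ∀ u : (ZMod p)ˣ,
      u ∈ Subgroup.zpowers (ZMod.unitOfCoprime (Fintype.card F) hcop.symm))
    (ℓ : ℕ) (hℓ : 0 < ℓ)
    (C : Submodule (Rq F p) (Fin ℓ → Rq F p)) (hC : IsHermSelfDual F p C) :
    ∃ v ∈ C, IsUnit (v ⟨0, hℓ⟩) := by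
  have : NeZero (p : F) := ⟨natCast_ne_zero_of_coprime_card F hcop⟩
  have : NeZero p := .of_neZero_natCast F
  have := isSemisimpleRing_Rq F (m := p)
  obtain ⟨k, hk⟩ := ZMod.exists_natCast_pow_eq_neg_one hcop.symm (hprim (-1))
  exact exists_mem_isUnit_apply_of_selfDual (σ := (conjR F p).toRingHom) (conjR_conjR F)
    (fun _ ↦ eq_zero_of_mul_conjR_self_eq_zero F hk) hC ⟨0, hℓ⟩

/-- Every Hermitian self-dual code over `R = F_q[Y]/(Y^p − 1)` of length `ℓ ≥ 1` has a
codeword whose first coordinate is a unit of `R`. -/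
theorem statement8 (F : Type) [Field F] [Fintype F]
    (p : ℕ) (hp : p.Prime) (hcop : Nat.Coprime p (Fintype.card F))
    (hprim : ∀ u : (ZMod p)ˣ,
      u ∈ Subgroup.zpowers (ZMod.unitOfCoprime (Fintype.card F) hcop.symm))
    (ℓ : ℕ) (hℓ : 0 < ℓ)
    (C : Submodule (Rq F p) (Fin ℓ → Rq F p)) (hC : IsHermSelfDual F p C) :
    ∃ v ∈ C, IsUnit (v ⟨0, hℓ⟩) :=
  statement8_general F p hcop hprim ℓ hℓ C hC
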